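/- arXiv:1707.01824 — 2 statements merged into one kernel-verified Lean document; each statement's English description precedes it below -/
import Mathlib

section
/- For all t, α, β > 0, the double series Σ_{n≥0} ((βt)^{2n}/(2n)!) Σ_{m=0}^{n} C(n,m) (α/β)^{2m} m! t^{-m} equals Φ₃(1; 1/2; t(α/2)², (βt/2)²), where Φ₃ is the Humbert confluent hypergeometric function. -/
/-!
With `a = 1` the factor `(1)_m` cancels `m!`, so the summand of `Φ₃(1; 1/2; x, y)` depends on
the pair `(m, k)` through `x^m y^k / k!` and `(1/2)_{m+k}` only. Summing along the antidiagonals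
`m + k = n` and using Legendre's duplication `(2n)! = 4^n n! (1/2)_n` turns the `n`-th block into
the `n`-th term of the series on the left. The rearrangement is justified by absolute convergence:
`n! n! ≤ (2n)!` bounds the summand by the product of two exponential series.
-/

/-- The Humbert confluent hypergeometric function `Φ₃(a;b;x,y)` (real version). -/
noncomputable def humbertPhi3 (a b x y : ℝ) : ℝ :=
  ∑' p : ℕ × ℕ,
    (Polynomial.eval a (ascPochhammer ℝ p.1) /
        Polynomial.eval b (ascPochhammer ℝ (p.1 + p.2))) *
      (x ^ p.1 / (p.1.factorial : ℝ)) * (y ^ p.2 / (p.2.factorial : ℝ))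

open Finset

theorem Summable.tsum_prod_eq_tsum_sum_antidiagonal {M A : Type*} [AddCommMonoid M]
    [TopologicalSpace M] [ContinuousAdd M] [T3Space M] [AddCommMonoid A] [HasAntidiagonal A]
    {f : A × A → M} (hf : Summable f) :
    ∑' p, f p = ∑' n, ∑ p ∈ antidiagonal n, f p := by
  conv_rhs => congr; ext; rw [← Finset.sum_finset_coe, ← tsum_fintype (L := .unconditional _)]
  rw [← HasAntidiagonal.sigmaAntidiagonalEquivProd.tsum_eq f]
  exact (HasAntidiagonal.sigmaAntidiagonalEquivProd.summable_iff.mpr hf).tsum_sigma'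
    fun n ↦ (hasSum_fintype _).summable

theorem ascPochhammer_half_mul_four_pow_mul_factorial {K : Type*} [Field K] [CharZero K]
    (n : ℕ) :
    (ascPochhammer K n).eval (1 / 2) * (4 ^ n * n.factorial) = (2 * n).factorial := by
  induction n with
  | zero => simp
  | succ n ih =>
    rw [ascPochhammer_succ_eval, show 2 * (n + 1) = 2 * n + 1 + 1 by ring]
    push_cast [Nat.factorial_succ] at ih ⊢
    linear_combination (2 * (n : K) + 1) * 2 * ((n : K) + 1) * ih

theorem factorial_le_four_pow_mul_ascPochhammer_half (n : ℕ) :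
    (n.factorial : ℝ) ≤ 4 ^ n * (ascPochhammer ℝ n).eval (1 / 2) := by
  refine le_of_mul_le_mul_right ?_ (Nat.cast_pos.mpr n.factorial_pos)
  calc (n.factorial : ℝ) * n.factorial ≤ (2 * n).factorial := by
        rw [two_mul]
        exact_mod_cast Nat.le_of_dvd (Nat.factorial_pos _)
          (Nat.factorial_mul_factorial_dvd_factorial_add n n)
    _ = 4 ^ n * (ascPochhammer ℝ n).eval (1 / 2) * n.factorial := by
        rw [← ascPochhammer_half_mul_four_pow_mul_factorial]
        ring

theorem humbertPhi3_one (b x y : ℝ) :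
    humbertPhi3 1 b x y = ∑' p : ℕ × ℕ,
      x ^ p.1 * (y ^ p.2 / p.2.factorial) / (ascPochhammer ℝ (p.1 + p.2)).eval b := by
  refine tsum_congr fun p ↦ ?_
  rw [ascPochhammer_eval_one]
  field_simp

theorem summable_humbertPhi3_one_half (x y : ℝ) :
    Summable fun p : ℕ × ℕ ↦
      x ^ p.1 * (y ^ p.2 / p.2.factorial) / (ascPochhammer ℝ (p.1 + p.2)).eval (1 / 2) := by
  have hexp := (Real.summable_pow_div_factorial (4 * |x|)).mul_of_nonneg
    (Real.summable_pow_div_factorial (4 * |y|)) (fun m ↦ by positivity) (fun k ↦ by positivity)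
  refine hexp.of_norm_bounded fun ⟨m, k⟩ ↦ ?_
  have hP : 0 < (ascPochhammer ℝ (m + k)).eval (1 / 2 : ℝ) := ascPochhammer_pos _ _ (by norm_num)
  have hfac : (m.factorial : ℝ) ≤ 4 ^ (m + k) * (ascPochhammer ℝ (m + k)).eval (1 / 2) :=
    (Nat.cast_le.mpr (Nat.factorial_le (Nat.le_add_right m k))).trans
      (factorial_le_four_pow_mul_ascPochhammer_half _)
  dsimp only
  rw [norm_div, norm_mul, norm_div, norm_pow, norm_pow, Real.norm_of_nonneg hP.le,
    RCLike.norm_natCast, Real.norm_eq_abs, Real.norm_eq_abs, div_le_iff₀ hP]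
  calc |x| ^ m * (|y| ^ k / k.factorial)
      ≤ |x| ^ m * (|y| ^ k / k.factorial) *
          (4 ^ (m + k) * (ascPochhammer ℝ (m + k)).eval (1 / 2) / m.factorial) := by
        refine le_mul_of_one_le_right (by positivity) ?_
        rwa [one_le_div (by positivity)]
    _ = _ := by rw [pow_add, mul_pow, mul_pow]; ring

theorem humbertPhi3_one_half_eq_tsum_sum_range (x y : ℝ) :
    humbertPhi3 1 (1 / 2) x y = ∑' n : ℕ, (∑ m ∈ range (n + 1),
      x ^ m * (y ^ (n - m) / (n - m).factorial)) / (ascPochhammer ℝ n).eval (1 / 2) := by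
  rw [humbertPhi3_one, (summable_humbertPhi3_one_half x y).tsum_prod_eq_tsum_sum_antidiagonal]
  refine tsum_congr fun n ↦ ?_
  rw [sum_div, Nat.sum_antidiagonal_eq_sum_range_succ_mk]
  refine sum_congr rfl fun m hm ↦ ?_
  rw [Nat.add_sub_cancel' (Nat.lt_succ_iff.mp (mem_range.mp hm))]

theorem series_eq_humbertPhi3_half_general (t α β : ℝ) (ht : 0 < t) (hβ : 0 < β) :
    (∑' n : ℕ, ((β * t) ^ (2 * n) / ((2 * n).factorial : ℝ)) *
        ∑ m ∈ Finset.range (n + 1),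
          (n.choose m : ℝ) * (α / β) ^ (2 * m) * (m.factorial : ℝ) * t ^ (-(m : ℤ))) =
      humbertPhi3 1 (1 / 2) (t * (α / 2) ^ 2) ((β * t / 2) ^ 2) := by
  rw [humbertPhi3_one_half_eq_tsum_sum_range]
  refine tsum_congr fun n ↦ ?_
  rw [mul_sum, sum_div]
  refine sum_congr rfl fun m hm ↦ ?_
  obtain ⟨k, rfl⟩ := Nat.exists_eq_add_of_le (Nat.lt_succ_iff.mp (mem_range.mp hm))
  have hP : (ascPochhammer ℝ (m + k)).eval (1 / 2) ≠ 0 :=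
    (ascPochhammer_pos _ _ (by norm_num)).ne'
  rw [Nat.cast_choose ℝ (Nat.le_add_right m k), Nat.add_sub_cancel_left, zpow_neg, zpow_natCast,
    eq_div_iff hP, ← ascPochhammer_half_mul_four_pow_mul_factorial]
  have ht0 := ht.ne'
  have hβ0 := hβ.ne'
  rw [show (4 : ℝ) = 2 ^ 2 by norm_num]
  simp only [div_pow, mul_pow, ← pow_mul]
  field_simp
  ring

/-- For `t, α, β > 0`,
`Σ_{n≥0} ((βt)^{2n}/(2n)!) Σ_{m=0}^{n} C(n,m) (α/β)^{2m} m! t^{-m}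
  = Φ₃(1; 1/2; t(α/2)², (βt/2)²)`. -/
theorem series_eq_humbertPhi3_half (t α β : ℝ) (ht : 0 < t) (hα : 0 < α) (hβ : 0 < β) :
    (∑' n : ℕ, ((β * t) ^ (2 * n) / ((2 * n).factorial : ℝ)) *
        ∑ m ∈ Finset.range (n + 1),
          (n.choose m : ℝ) * (α / β) ^ (2 * m) * (m.factorial : ℝ) * t ^ (-(m : ℤ))) =
      humbertPhi3 1 (1 / 2) (t * (α / 2) ^ 2) ((β * t / 2) ^ 2) :=
  series_eq_humbertPhi3_half_general t α β ht hβ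
end

section
/- For all t, α, β > 0, the double series t · Σ_{n≥0} ((βt)^{2n}/(2n+1)!) Σ_{m=0}^{n} C(n,m) (α/β)^{2m} m! t^{-m} equals t · Φ₃(1; 3/2; t(α/2)², (βt/2)²). -/
open Finset Nat

theorem Summable.tsum_eq_tsum_sum_antidiagonal {A α : Type*} [AddCommMonoid A]
    [HasAntidiagonal A] [AddCommMonoid α] [TopologicalSpace α] [ContinuousAdd α] [T3Space α]
    {f : A × A → α} (hf : Summable f) : ∑' p, f p = ∑' n, ∑ p ∈ antidiagonal n, f p := by
  let e := HasAntidiagonal.sigmaAntidiagonalEquivProd (A := A)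
  rw [← e.tsum_eq f]
  exact ((e.summable_iff.mpr hf).tsum_sigma' fun n ↦ (hasSum_fintype _).summable).trans
    (tsum_congr fun n ↦ Finset.tsum_subtype (antidiagonal n) f)

theorem ascPochhammer_eval_le_eval {S : Type*} [Semiring S] [PartialOrder S]
    [IsStrictOrderedRing S] {a b : S} (ha : 0 < a) (hab : a ≤ b) (n : ℕ) :
    (ascPochhammer S n).eval a ≤ (ascPochhammer S n).eval b := by
  induction n with
  | zero => simp
  | succ n ih =>
    rw [ascPochhammer_succ_eval, ascPochhammer_succ_eval]
    exact mul_le_mul ih (by gcongr) (by positivity) (ascPochhammer_pos n b (ha.trans_le hab)).le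

theorem factorial_le_ascPochhammer_eval {b : ℝ} (hb : 1 ≤ b) (n : ℕ) :
    (n ! : ℝ) ≤ (ascPochhammer ℝ n).eval b := by
  simpa using ascPochhammer_eval_le_eval one_pos hb n

theorem factorial_two_mul_add_one_eq_four_pow_mul_ascPochhammer {K : Type*} [Field K] [CharZero K]
    (n : ℕ) : ((2 * n + 1)! : K) = 4 ^ n * (ascPochhammer K n).eval (3 / 2) * n ! := by
  induction n with
  | zero => simp
  | succ n ih =>
    rw [show 2 * (n + 1) + 1 = 2 * n + 1 + 1 + 1 by ring, factorial_succ (2 * n + 1 + 1),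
      factorial_succ (2 * n + 1), factorial_succ n, ascPochhammer_succ_eval]
    push_cast
    rw [ih]
    ring

theorem humbertPhi3_one_eq_tsum (b x y : ℝ) :
    humbertPhi3 1 b x y =
      ∑' p : ℕ × ℕ, x ^ p.1 * y ^ p.2 / ((ascPochhammer ℝ (p.1 + p.2)).eval b * p.2 !) := by
  refine tsum_congr fun p ↦ ?_
  rw [ascPochhammer_eval_one]
  field_simp

theorem summable_humbertPhi3_one_terms {b : ℝ} (hb : 1 ≤ b) (x y : ℝ) :
    Summable fun p : ℕ × ℕ ↦
      x ^ p.1 * y ^ p.2 / ((ascPochhammer ℝ (p.1 + p.2)).eval b * p.2 !) := by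
  have hexp : Summable fun p : ℕ × ℕ ↦ |x| ^ p.1 / p.1 ! * (|y| ^ p.2 / p.2 !) :=
    (Real.summable_pow_div_factorial |x|).mul_of_nonneg (Real.summable_pow_div_factorial |y|)
      (fun n ↦ by positivity) (fun n ↦ by positivity)
  refine Summable.of_norm_bounded hexp fun p ↦ ?_
  obtain ⟨m, k⟩ := p
  dsimp only
  have hm : (m ! : ℝ) ≤ (ascPochhammer ℝ (m + k)).eval b :=
    (Nat.cast_le.mpr (factorial_le (m.le_add_right k))).trans
      (factorial_le_ascPochhammer_eval hb _)
  rw [Real.norm_eq_abs, abs_div, abs_mul, abs_mul, abs_pow, abs_pow,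
    abs_of_pos (ascPochhammer_pos _ b (by linarith)), Nat.abs_cast, div_mul_div_comm (|x| ^ m)]
  gcongr

theorem pow_div_factorial_mul_choose_eq_humbertPhi3_term {t α β : ℝ} (ht : t ≠ 0) (hβ : β ≠ 0)
    (m k : ℕ) :
    (β * t) ^ (2 * (m + k)) / ((2 * (m + k) + 1)! : ℝ) *
        ((m + k).choose m * (α / β) ^ (2 * m) * m ! * t ^ (-(m : ℤ))) =
      (t * (α / 2) ^ 2) ^ m * ((β * t / 2) ^ 2) ^ k /
        ((ascPochhammer ℝ (m + k)).eval (3 / 2) * k !) := by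
  have hchoose : ((m + k).choose m : ℝ) * m ! * k ! = (m + k)! := by
    rw [choose_symm_add]
    exact_mod_cast add_choose_mul_factorial_mul_factorial m k
  rw [factorial_two_mul_add_one_eq_four_pow_mul_ascPochhammer, ← hchoose, zpow_neg, zpow_natCast]
  have hP := ascPochhammer_pos (m + k) (3 / 2 : ℝ) (by norm_num)
  have hC : ((m + k).choose m : ℝ) ≠ 0 := Nat.cast_ne_zero.mpr (choose_pos (m.le_add_right k)).ne'
  simp only [div_pow, mul_pow]
  field_simp
  ring

theorem series_eq_humbertPhi3_threeHalves_general (t α β : ℝ) (ht : 0 < t) (hβ : 0 < β) :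
    (t * ∑' n : ℕ, ((β * t) ^ (2 * n) / ((2 * n + 1).factorial : ℝ)) *
        ∑ m ∈ Finset.range (n + 1),
          (n.choose m : ℝ) * (α / β) ^ (2 * m) * (m.factorial : ℝ) * t ^ (-(m : ℤ))) =
      t * humbertPhi3 1 (3 / 2) (t * (α / 2) ^ 2) ((β * t / 2) ^ 2) := by
  rw [humbertPhi3_one_eq_tsum,
    (summable_humbertPhi3_one_terms (by norm_num) _ _).tsum_eq_tsum_sum_antidiagonal]
  congr 1
  refine tsum_congr fun n ↦ ?_
  rw [Nat.sum_antidiagonal_eq_sum_range_succ_mk, mul_sum]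
  refine sum_congr rfl fun m hm ↦ ?_
  obtain ⟨k, rfl⟩ := Nat.exists_eq_add_of_le (mem_range_succ_iff.mp hm)
  rw [Nat.add_sub_cancel_left]
  exact pow_div_factorial_mul_choose_eq_humbertPhi3_term ht.ne' hβ.ne' m k

/-- For `t, α, β > 0`,
`t · Σ_{n≥0} ((βt)^{2n}/(2n+1)!) Σ_{m=0}^{n} C(n,m) (α/β)^{2m} m! t^{-m}
  = t · Φ₃(1; 3/2; t(α/2)², (βt/2)²)`. -/
theorem series_eq_humbertPhi3_threeHalves (t α β : ℝ) (ht : 0 < t) (hα : 0 < α) (hβ : 0 < β) :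
    (t * ∑' n : ℕ, ((β * t) ^ (2 * n) / ((2 * n + 1).factorial : ℝ)) *
        ∑ m ∈ Finset.range (n + 1),
          (n.choose m : ℝ) * (α / β) ^ (2 * m) * (m.factorial : ℝ) * t ^ (-(m : ℤ))) =
      t * humbertPhi3 1 (3 / 2) (t * (α / 2) ^ 2) ((β * t / 2) ^ 2) :=
  series_eq_humbertPhi3_threeHalves_general t α β ht hβ
end
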